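/- Let 1 < p < ∞, and let (Â, ξ̂) be a finite rooted tree in which the number of immediate successors of a vertex depends only on its depth. Let û, ŵ : V(Â) → (0, ∞) be level-constant weights (û(ξ) and ŵ(ξ) depend only on the depth of ξ). For f : V(Â) → [0, ∞) set ℱ(f) = ∑_{ξ ∈ V(Â)} ŵ(ξ)^p (∑_{ξ̂ ≤ ξ' ≤ ξ} û(ξ') f(ξ')^{1/p})^p. Then sup{ℱ(f) : f ≥ 0, ∑_{ξ} f(ξ) ≤ 1} = sup{ℱ(f) : f ≥ 0, ∑_{ξ} f(ξ) ≤ 1, and f(ξ') = f(ξ'') whenever ξ', ξ'' have the same depth}. -/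

import Mathlib

open scoped Classical

noncomputable section

/-- A finite partial order is a rooted tree if it has a least element (the root) and
for every `ξ` the set of predecessors `{η | η ≤ ξ}` is linearly ordered. -/
def IsRootedTree (V : Type) [Fintype V] [PartialOrder V] : Prop :=
  (∃ ξ₀ : V, ∀ ξ : V, ξ₀ ≤ ξ) ∧
  ∀ ξ η₁ η₂ : V, η₁ ≤ ξ → η₂ ≤ ξ → η₁ ≤ η₂ ∨ η₂ ≤ η₁

/-- The depth of a vertex: the number of its strict predecessors. -/
def treeDepth {V : Type} [PartialOrder V] (ξ : V) : ℕ :=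
  Nat.card {η : V // η < ξ}

/-- The least constant `C ≥ 0` in the discrete two-weight Hardy-type inequality
`(∑_{ξ ≥ ξs} w(ξ)^q (∑_{ξs ≤ ξ' ≤ ξ} u(ξ') f(ξ'))^q)^{1/q} ≤ C (∑_{ξ ≥ ξs} f(ξ)^p)^{1/p}`
over all nonnegative `f`. -/
def SconstPQ {V : Type} [Fintype V] [PartialOrder V]
    (p q : ℝ) (u w : V → ℝ) (ξs : V) : ℝ :=
  sInf {C : ℝ | 0 ≤ C ∧ ∀ f : V → ℝ, (∀ ξ : V, 0 ≤ f ξ) →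
    (∑ ξ ∈ Finset.univ.filter (fun ξ : V => ξs ≤ ξ),
        w ξ ^ q * (∑ ξ' ∈ Finset.univ.filter (fun ξ' : V => ξs ≤ ξ' ∧ ξ' ≤ ξ),
          u ξ' * f ξ') ^ q) ^ (1 / q)
      ≤ C * (∑ ξ ∈ Finset.univ.filter (fun ξ : V => ξs ≤ ξ), f ξ ^ p) ^ (1 / p)}

/-- The family `J'_{ξs}`: subsets `D` of `{η | η ≥ ξs}` containing `ξs`, closed under
taking intermediate vertices, and such that every non-maximal element of `D` has all
of its immediate successors (in `V`) in `D`. -/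
def Jfam {V : Type} [Fintype V] [PartialOrder V] (ξs : V) (D : Finset V) : Prop :=
  ξs ∈ D ∧ (∀ ξ ∈ D, ξs ≤ ξ) ∧
  (∀ η ζ : V, ζ ∈ D → ξs ≤ η → η ≤ ζ → η ∈ D) ∧
  (∀ ξ ∈ D, (∃ ζ ∈ D, ξ < ζ) → ∀ η : V, ξ ⋖ η → η ∈ D)

/-- The quantity `β_D`: the infimum of `(∑_ξ |f(ξ)|^p)^{1/p}` over functions `f` with
`∑_{ξs ≤ ξ' ≤ ξ} f(ξ') u(ξ') = 1` for every maximal element `ξ` of `D`. -/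
def betaD {V : Type} [Fintype V] [PartialOrder V]
    (p : ℝ) (u : V → ℝ) (ξs : V) (D : Finset V) : ℝ :=
  sInf {b : ℝ | ∃ f : V → ℝ,
    (∀ ξ ∈ D, (∀ ζ ∈ D, ¬ ξ < ζ) →
      ∑ ξ' ∈ Finset.univ.filter (fun ξ' : V => ξs ≤ ξ' ∧ ξ' ≤ ξ), f ξ' * u ξ' = 1) ∧
    b = (∑ ξ : V, |f ξ| ^ p) ^ (1 / p)}

/-!
Averaging `f` over each level (the vertices of a given depth) preserves `∑ f`, and it can only
increase `ℱ`. Index the chain below a vertex `ξ` of depth `j` by depth, writing `a_i ξ` for its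
ancestor at depth `i`: the level-`j` part of `ℱ(f)` is
`W_j^p ∑_ξ (∑_{i ≤ j} U_i f(a_i ξ)^{1/p})^p`, and Minkowski's inequality over the vertices of
the level bounds it by `W_j^p (∑_{i ≤ j} U_i (∑_ξ f(a_i ξ))^{1/p})^p`. By regularity all vertices
of depth `i` have the same number of descendants of depth `j`, so `∑_ξ f(a_i ξ)` only depends on
the mean of `f` on level `i`; for the level-averaged function Minkowski's inequality is an
equality, so the bound is its level-`j` contribution.
-/

open Finset

section Minkowski

variable {ι κ : Type*} {p : ℝ}

theorem Lp_sum_le_sum_Lp_of_nonneg (hp : 1 ≤ p) (I : Finset ι) (K : Finset κ)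
    {x : ι → κ → ℝ} (hx : ∀ i ∈ I, ∀ k ∈ K, 0 ≤ x i k) :
    (∑ k ∈ K, (∑ i ∈ I, x i k) ^ p) ^ (1 / p) ≤ ∑ i ∈ I, (∑ k ∈ K, x i k ^ p) ^ (1 / p) := by
  induction I using cons_induction with
  | empty =>
    simp [Real.zero_rpow (by positivity : p ≠ 0), Real.zero_rpow (by positivity : p⁻¹ ≠ 0)]
  | cons a I ha ih =>
    simp only [forall_mem_cons] at hx
    simp only [sum_cons]
    calc _ ≤ (∑ k ∈ K, x a k ^ p) ^ (1 / p) + (∑ k ∈ K, (∑ i ∈ I, x i k) ^ p) ^ (1 / p) :=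
          Real.Lp_add_le_of_nonneg K hp hx.1 fun k hk =>
            sum_nonneg fun i hi => hx.2 i hi k hk
      _ ≤ _ := add_le_add_right (ih hx.2) _

theorem sum_rpow_sum_mul_rpow_one_div_le (hp : 1 ≤ p) (I : Finset ι) (K : Finset κ)
    {c : ι → ℝ} (hc : ∀ i ∈ I, 0 ≤ c i) {y : ι → κ → ℝ} (hy : ∀ i ∈ I, ∀ k ∈ K, 0 ≤ y i k) :
    ∑ k ∈ K, (∑ i ∈ I, c i * y i k ^ (1 / p)) ^ p
      ≤ (∑ i ∈ I, c i * (∑ k ∈ K, y i k) ^ (1 / p)) ^ p := by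
  have hp0 : 0 < p := by linarith
  have hterm : ∀ i ∈ I, (∑ k ∈ K, (c i * y i k ^ (1 / p)) ^ p) ^ (1 / p)
      = c i * (∑ k ∈ K, y i k) ^ (1 / p) := by
    intro i hi
    simp only [one_div]
    rw [sum_congr rfl fun k hk => by
        rw [Real.mul_rpow (hc i hi) (Real.rpow_nonneg (hy i hi k hk) _),
          Real.rpow_inv_rpow (hy i hi k hk) hp0.ne'],
      ← mul_sum, Real.mul_rpow (Real.rpow_nonneg (hc i hi) _)
        (sum_nonneg fun k hk => hy i hi k hk), Real.rpow_rpow_inv (hc i hi) hp0.ne']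
  have hx : ∀ i ∈ I, ∀ k ∈ K, 0 ≤ c i * y i k ^ (1 / p) :=
    fun i hi k hk => mul_nonneg (hc i hi) (Real.rpow_nonneg (hy i hi k hk) _)
  rw [← Real.rpow_inv_le_iff_of_pos (sum_nonneg fun k hk => Real.rpow_nonneg
      (sum_nonneg fun i hi => hx i hi k hk) _) _ hp0, ← one_div,
    ← sum_congr rfl hterm]
  · exact Lp_sum_le_sum_Lp_of_nonneg hp I K hx
  · exact sum_nonneg fun i hi => mul_nonneg (hc i hi) (Real.rpow_nonneg
      (sum_nonneg fun k hk => hy i hi k hk) _)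

theorem rpow_sum_mul_rpow_one_div_mul_left (hp : 0 < p) (I : Finset ι) {c a : ι → ℝ}
    (hc : ∀ i ∈ I, 0 ≤ c i) (ha : ∀ i ∈ I, 0 ≤ a i) {t : ℝ} (ht : 0 ≤ t) :
    (∑ i ∈ I, c i * (t * a i) ^ (1 / p)) ^ p = t * (∑ i ∈ I, c i * a i ^ (1 / p)) ^ p := by
  simp only [one_div]
  rw [sum_congr rfl fun i hi => by rw [Real.mul_rpow ht (ha i hi), mul_left_comm],
    ← mul_sum, Real.mul_rpow (by positivity)
      (sum_nonneg fun i hi => mul_nonneg (hc i hi) (Real.rpow_nonneg (ha i hi) _)),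
    Real.rpow_inv_rpow ht hp.ne']

end Minkowski

section RootedTree

variable {V : Type} [Fintype V] [PartialOrder V]

/-- The ancestor of `ξ` at depth `i`; the junk value is `ξ` when `i > treeDepth ξ`. -/
def ancestorAt (ξ : V) (i : ℕ) : V :=
  if h : ∃ η ≤ ξ, treeDepth η = i then h.choose else ξ

def descendantsAt (η : V) (j : ℕ) : Finset V :=
  univ.filter fun ξ => η ≤ ξ ∧ treeDepth ξ = j

variable (V) in
def level (j : ℕ) : Finset V :=
  univ.filter fun ξ => treeDepth ξ = j

lemma mem_level {ξ : V} {j : ℕ} : ξ ∈ level V j ↔ treeDepth ξ = j := by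
  simp [level]

lemma sum_level_eq_sum {M : Type*} [AddCommMonoid M] (g : V → M) :
    ∑ j ∈ univ.image (treeDepth (V := V)), ∑ ξ ∈ level V j, g ξ = ∑ ξ, g ξ :=
  sum_fiberwise_of_maps_to (fun ξ _ => mem_image_of_mem _ (mem_univ ξ)) g

lemma treeDepth_eq_card (ξ : V) : treeDepth ξ = #(univ.filter fun η => η < ξ) := by
  rw [treeDepth, Nat.card_eq_fintype_card, Fintype.card_subtype]

lemma treeDepth_strictMono : StrictMono (treeDepth (V := V)) := fun η ξ h => by
  simp only [treeDepth_eq_card]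
  exact card_lt_card <| (ssubset_iff_of_subset fun ζ hζ => by
    simp only [mem_filter, mem_univ, true_and] at hζ ⊢; exact hζ.trans h).2
    ⟨η, by simpa using h, by simp⟩

lemma card_filter_le_eq_treeDepth_add_one (ξ : V) :
    #(univ.filter fun η => η ≤ ξ) = treeDepth ξ + 1 := by
  have : (univ.filter fun η => η ≤ ξ) = insert ξ (univ.filter fun η => η < ξ) := by
    ext η; simp [le_iff_lt_or_eq, or_comm]
  rw [this, card_insert_of_notMem (by simp), treeDepth_eq_card]

lemma descendantsAt_treeDepth (η : V) : descendantsAt η (treeDepth η) = {η} := by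
  ext ξ
  simp only [descendantsAt, mem_filter, mem_univ, true_and, mem_singleton]
  refine ⟨fun ⟨h, hd⟩ => ?_, fun h => ⟨h.ge, congrArg _ h⟩⟩
  exact ((h.lt_or_eq).resolve_left fun hlt => (treeDepth_strictMono hlt).ne hd.symm).symm

def levelMean (f : V → ℝ) (i : ℕ) : ℝ :=
  (∑ ξ ∈ level V i, f ξ) / #(level V i)

lemma levelMean_nonneg {f : V → ℝ} (hf : ∀ ξ, 0 ≤ f ξ) (i : ℕ) : 0 ≤ levelMean f i :=
  div_nonneg (sum_nonneg fun ξ _ => hf ξ) (Nat.cast_nonneg _)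

lemma card_mul_levelMean (f : V → ℝ) (i : ℕ) :
    #(level V i) * levelMean f i = ∑ ξ ∈ level V i, f ξ := by
  rcases (level V i).eq_empty_or_nonempty with h | h
  · simp [h]
  · exact mul_div_cancel₀ _ (Nat.cast_ne_zero.2 h.card_pos.ne')

lemma sum_levelMean_treeDepth (f : V → ℝ) : ∑ ξ : V, levelMean f (treeDepth ξ) = ∑ ξ, f ξ := by
  rw [← sum_level_eq_sum f, ← sum_level_eq_sum]
  refine sum_congr rfl fun j _ => ?_
  rw [sum_congr rfl fun ξ hξ => by rw [mem_level.1 hξ], sum_const, nsmul_eq_mul,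
    card_mul_levelMean]

variable (hch : ∀ ξ η₁ η₂ : V, η₁ ≤ ξ → η₂ ≤ ξ → η₁ ≤ η₂ ∨ η₂ ≤ η₁)
include hch

lemma treeDepth_injOn_le (ξ : V) : Set.InjOn treeDepth {η | η ≤ ξ} := by
  intro η₁ h₁ η₂ h₂ h
  rcases hch ξ η₁ η₂ h₁ h₂ with h' | h' <;>
    [exact (h'.lt_or_eq).resolve_left fun hlt => (treeDepth_strictMono hlt).ne h;
     exact ((h'.lt_or_eq).resolve_left fun hlt => (treeDepth_strictMono hlt).ne h.symm).symm]

lemma image_treeDepth_filter_le (ξ : V) :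
    (univ.filter fun η => η ≤ ξ).image treeDepth = range (treeDepth ξ + 1) := by
  refine eq_of_subset_of_card_le (fun i hi => ?_) ?_
  · obtain ⟨η, hη, rfl⟩ := mem_image.1 hi
    exact mem_range_succ_iff.2 (treeDepth_strictMono.monotone (mem_filter.1 hη).2)
  · rw [card_range, card_image_of_injOn, card_filter_le_eq_treeDepth_add_one]
    simpa using treeDepth_injOn_le hch ξ

lemma exists_le_treeDepth_eq {ξ : V} {i : ℕ} (hi : i ≤ treeDepth ξ) :
    ∃ η ≤ ξ, treeDepth η = i := by
  obtain ⟨η, hη, rfl⟩ := mem_image.1 <|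
    (image_treeDepth_filter_le hch ξ).symm ▸ mem_range_succ_iff.2 hi
  exact ⟨η, (mem_filter.1 hη).2, rfl⟩

lemma ancestorAt_spec {ξ : V} {i : ℕ} (hi : i ≤ treeDepth ξ) :
    ancestorAt ξ i ≤ ξ ∧ treeDepth (ancestorAt ξ i) = i := by
  have h := exists_le_treeDepth_eq hch hi
  rw [ancestorAt, dif_pos h]
  exact h.choose_spec

lemma ancestorAt_treeDepth {η ξ : V} (h : η ≤ ξ) : ancestorAt ξ (treeDepth η) = η :=
  have hs := ancestorAt_spec hch (treeDepth_strictMono.monotone h)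
  treeDepth_injOn_le hch ξ hs.1 h hs.2

lemma ancestorAt_eq_iff {ξ η : V} {i : ℕ} (hi : i ≤ treeDepth ξ) (hη : treeDepth η = i) :
    ancestorAt ξ i = η ↔ η ≤ ξ :=
  ⟨fun h => h ▸ (ancestorAt_spec hch hi).1, fun h => hη ▸ ancestorAt_treeDepth hch h⟩

lemma sum_filter_le_eq_sum_range_ancestorAt {M : Type*} [AddCommMonoid M] (ξ : V)
    (g : ℕ → V → M) :
    ∑ η ∈ univ.filter (fun η => η ≤ ξ), g (treeDepth η) η
      = ∑ i ∈ range (treeDepth ξ + 1), g i (ancestorAt ξ i) := by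
  refine sum_nbij' treeDepth (ancestorAt ξ) (fun η hη => ?_) (fun i hi => ?_) (fun η hη => ?_)
    (fun i hi => ?_) (fun η hη => ?_)
  all_goals simp only [mem_filter, mem_univ, true_and, mem_range, Nat.lt_succ_iff] at *
  · exact treeDepth_strictMono.monotone hη
  · exact (ancestorAt_spec hch hi).1
  · exact ancestorAt_treeDepth hch hη
  · exact (ancestorAt_spec hch hi).2
  · rw [ancestorAt_treeDepth hch hη]

lemma covBy_iff_le_and_treeDepth_eq {ζ ξ : V} :
    ζ ⋖ ξ ↔ ζ ≤ ξ ∧ treeDepth ξ = treeDepth ζ + 1 := by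
  refine ⟨fun h => ⟨h.le, ?_⟩, fun ⟨hle, hd⟩ => ?_⟩
  · have hlt := treeDepth_strictMono h.lt
    obtain ⟨hα, hdα⟩ := ancestorAt_spec hch (ξ := ξ) (i := treeDepth ζ + 1) hlt
    have hζα : ζ < ancestorAt ξ (treeDepth ζ + 1) := by
      rcases hch ξ ζ _ h.le hα with h' | h'
      · exact h'.lt_of_ne fun he => by rw [← he] at hdα; omega
      · have := treeDepth_strictMono.monotone h'; omega
    rw [← (hα.lt_or_eq).resolve_left (h.2 hζα), hdα]
  · refine ⟨hle.lt_of_ne fun he => by rw [he] at hd; omega, fun α hζα hαξ => ?_⟩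
    have := treeDepth_strictMono hζα
    have := treeDepth_strictMono hαξ
    omega

lemma natCard_covBy_eq_card_descendantsAt (ζ : V) :
    Nat.card {ξ : V // ζ ⋖ ξ} = #(descendantsAt ζ (treeDepth ζ + 1)) := by
  rw [Nat.card_eq_fintype_card, Fintype.card_subtype]
  simp only [descendantsAt, covBy_iff_le_and_treeDepth_eq hch]

lemma card_descendantsAt_succ {η : V} {k : ℕ} (hk : treeDepth η ≤ k) :
    #(descendantsAt η (k + 1)) = ∑ ζ ∈ descendantsAt η k, #(descendantsAt ζ (k + 1)) := by
  rw [card_eq_sum_card_fiberwise (f := (ancestorAt · k)) fun ξ hξ => ?_]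
  · refine sum_congr rfl fun ζ hζ => congrArg card ?_
    simp only [descendantsAt, mem_filter, mem_univ, true_and] at hζ
    ext ξ
    simp only [descendantsAt, mem_filter, mem_univ, true_and]
    constructor
    · rintro ⟨⟨-, hξ⟩, h⟩
      exact ⟨(ancestorAt_eq_iff hch (by omega) hζ.2).1 h, hξ⟩
    · rintro ⟨h, hξ⟩
      exact ⟨⟨hζ.1.trans h, hξ⟩, (ancestorAt_eq_iff hch (by omega) hζ.2).2 h⟩
  · simp only [mem_coe, descendantsAt, mem_filter, mem_univ, true_and] at hξ ⊢
    obtain ⟨hα, hdα⟩ := ancestorAt_spec hch (ξ := ξ) (i := k) (by omega)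
    refine ⟨?_, hdα⟩
    rcases hch ξ η _ hξ.1 hα with h | h
    · exact h
    · exact (treeDepth_injOn_le hch ξ hα hξ.1
        (le_antisymm (treeDepth_strictMono.monotone h) (hdα.symm ▸ hk))).ge

lemma card_descendantsAt_treeDepth_add (c : ℕ → ℕ)
    (hc : ∀ ζ : V, Nat.card {ξ : V // ζ ⋖ ξ} = c (treeDepth ζ)) (η : V) (n : ℕ) :
    #(descendantsAt η (treeDepth η + n)) = ∏ m ∈ range n, c (treeDepth η + m) := by
  induction n with
  | zero => simp [descendantsAt_treeDepth]
  | succ n ih =>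
    rw [← add_assoc, card_descendantsAt_succ hch (Nat.le_add_right _ _), sum_const_nat, ih,
      prod_range_succ]
    intro ζ hζ
    rw [← (mem_filter.1 hζ).2.2, ← hc, natCard_covBy_eq_card_descendantsAt hch]

lemma sum_level_ancestorAt {M : Type*} [AddCommMonoid M] {i j : ℕ} (hij : i ≤ j) (g : V → M) :
    ∑ ξ ∈ level V j, g (ancestorAt ξ i) = ∑ η ∈ level V i, #(descendantsAt η j) • g η := by
  rw [← sum_fiberwise_of_maps_to (g := (ancestorAt · i)) (t := level V i) fun ξ hξ => ?_]
  · refine sum_congr rfl fun η hη => ?_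
    have hfiber : (level V j).filter (ancestorAt · i = η) = descendantsAt η j := by
      ext ξ
      simp only [level, descendantsAt, mem_filter, mem_univ, true_and]
      exact ⟨fun ⟨hξ, h⟩ => ⟨(ancestorAt_eq_iff hch (hξ ▸ hij) (mem_level.1 hη)).1 h, hξ⟩,
        fun ⟨h, hξ⟩ => ⟨hξ, (ancestorAt_eq_iff hch (hξ ▸ hij) (mem_level.1 hη)).2 h⟩⟩
    rw [sum_congr rfl fun ξ hξ => by rw [(mem_filter.1 hξ).2], sum_const, hfiber]
  · exact mem_level.2 (ancestorAt_spec hch ((mem_level.1 hξ).symm ▸ hij)).2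

lemma sum_level_ancestorAt_eq_smul {M : Type*} [AddCommMonoid M] (c : ℕ → ℕ)
    (hc : ∀ ζ : V, Nat.card {ξ : V // ζ ⋖ ξ} = c (treeDepth ζ)) {i j : ℕ} (hij : i ≤ j)
    (g : V → M) :
    ∑ ξ ∈ level V j, g (ancestorAt ξ i)
      = (∏ m ∈ range (j - i), c (i + m)) • ∑ η ∈ level V i, g η := by
  rw [sum_level_ancestorAt hch hij, smul_sum]
  refine sum_congr rfl fun η hη => ?_
  have h := card_descendantsAt_treeDepth_add hch c hc η (j - i)
  rw [mem_level.1 hη, Nat.add_sub_cancel' hij] at h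
  rw [h]

lemma sum_level_ancestorAt_eq_card_mul_levelMean (c : ℕ → ℕ)
    (hc : ∀ ζ : V, Nat.card {ξ : V // ζ ⋖ ξ} = c (treeDepth ζ)) {i j : ℕ} (hij : i ≤ j)
    (f : V → ℝ) :
    ∑ ξ ∈ level V j, f (ancestorAt ξ i) = #(level V j) * levelMean f i := by
  rw [sum_level_ancestorAt_eq_smul hch c hc hij, ← card_mul_levelMean, ← nsmul_eq_mul,
    ← sum_const, ← sum_level_ancestorAt_eq_smul hch c hc hij (fun _ => levelMean f i),
    sum_const, nsmul_eq_mul]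

end RootedTree

section TreeFunctional

variable {V : Type} [Fintype V] [PartialOrder V] {p : ℝ}

def treeFunctional (p : ℝ) (ξhat : V) (U W : ℕ → ℝ) (f : V → ℝ) : ℝ :=
  ∑ ξ : V, W (treeDepth ξ) ^ p *
    (∑ ξ' ∈ univ.filter (fun ξ' : V => ξhat ≤ ξ' ∧ ξ' ≤ ξ),
      U (treeDepth ξ') * f ξ' ^ (1 / p)) ^ p

variable (hch : ∀ ξ η₁ η₂ : V, η₁ ≤ ξ → η₂ ≤ ξ → η₁ ≤ η₂ ∨ η₂ ≤ η₁) (c : ℕ → ℕ)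
  (hc : ∀ ζ : V, Nat.card {ξ : V // ζ ⋖ ξ} = c (treeDepth ζ))
include hch hc

lemma sum_level_rpow_le_levelMean (hp : 1 ≤ p) {U : ℕ → ℝ} (hU : ∀ i, 0 ≤ U i)
    {f : V → ℝ} (hf : ∀ ξ, 0 ≤ f ξ) (j : ℕ) :
    ∑ ξ ∈ level V j, (∑ η ∈ univ.filter (· ≤ ξ), U (treeDepth η) * f η ^ (1 / p)) ^ p ≤
      ∑ ξ ∈ level V j, (∑ η ∈ univ.filter (· ≤ ξ),
        U (treeDepth η) * levelMean f (treeDepth η) ^ (1 / p)) ^ p := by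
  have hchain : ∀ (g : ℕ → V → ℝ), ∀ ξ ∈ level V j, ∑ η ∈ univ.filter (· ≤ ξ),
      g (treeDepth η) η = ∑ i ∈ range (j + 1), g i (ancestorAt ξ i) := by
    intro g ξ hξ
    rw [← mem_level.1 hξ]
    exact sum_filter_le_eq_sum_range_ancestorAt hch ξ g
  calc _ = ∑ ξ ∈ level V j, (∑ i ∈ range (j + 1), U i * f (ancestorAt ξ i) ^ (1 / p)) ^ p :=
        sum_congr rfl fun ξ hξ =>
          congrArg (· ^ p) (hchain (fun i η => U i * f η ^ (1 / p)) ξ hξ)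
    _ ≤ (∑ i ∈ range (j + 1), U i * (∑ ξ ∈ level V j, f (ancestorAt ξ i)) ^ (1 / p)) ^ p :=
        sum_rpow_sum_mul_rpow_one_div_le hp _ _ (fun i _ => hU i) fun i _ ξ _ => hf _
    _ = (∑ i ∈ range (j + 1), U i * (#(level V j) * levelMean f i) ^ (1 / p)) ^ p := by
        refine congrArg (· ^ p) (sum_congr rfl fun i hi => ?_)
        rw [sum_level_ancestorAt_eq_card_mul_levelMean hch c hc
          (Nat.lt_succ_iff.1 (mem_range.1 hi))]
    _ = #(level V j) * (∑ i ∈ range (j + 1), U i * levelMean f i ^ (1 / p)) ^ p :=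
        rpow_sum_mul_rpow_one_div_mul_left (by linarith) _ (fun i _ => hU i)
          (fun i _ => levelMean_nonneg hf i) (Nat.cast_nonneg _)
    _ = _ := by
        rw [← nsmul_eq_mul, ← sum_const]
        exact sum_congr rfl fun ξ hξ => congrArg (· ^ p)
          (hchain (fun i _ => U i * levelMean f i ^ (1 / p)) ξ hξ).symm

lemma treeFunctional_le_treeFunctional_levelMean (hp : 1 ≤ p) {ξhat : V} (hroot : ∀ η : V, ξhat ≤ η)
    {U W : ℕ → ℝ} (hU : ∀ i, 0 ≤ U i) (hW : ∀ i, 0 ≤ W i) {f : V → ℝ} (hf : ∀ ξ, 0 ≤ f ξ) :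
    treeFunctional p ξhat U W f ≤ treeFunctional p ξhat U W (levelMean f ∘ treeDepth) := by
  have hfilter : ∀ ξ : V, univ.filter (fun η => ξhat ≤ η ∧ η ≤ ξ) = univ.filter (· ≤ ξ) :=
    fun ξ => filter_congr fun η _ => and_iff_right (hroot η)
  have hlevel : ∀ (j : ℕ) (g : V → ℝ), ∑ ξ ∈ level V j, W (treeDepth ξ) ^ p * g ξ
      = W j ^ p * ∑ ξ ∈ level V j, g ξ := fun j g => by
    rw [mul_sum]
    exact sum_congr rfl fun ξ hξ => by rw [mem_level.1 hξ]
  simp only [treeFunctional, hfilter, Function.comp_apply]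
  rw [← sum_level_eq_sum, ← sum_level_eq_sum]
  refine sum_le_sum fun j _ => ?_
  rw [hlevel, hlevel]
  exact mul_le_mul_of_nonneg_left (sum_level_rpow_le_levelMean hch c hc hp hU hf j)
    (Real.rpow_nonneg (hW j) p)

end TreeFunctional

/-- symmetrization: on a regular rooted tree (the number of immediate
successors depends only on the depth) with level-constant weights, the supremum of the
concave functional `ℱ` over the unit simplex is attained on level-constant functions. -/
theorem statement12 (p : ℝ) (hp : 1 < p)
    (V : Type) [Fintype V] [PartialOrder V] (htree : IsRootedTree V)
    (ξhat : V) (hroot : ∀ η : V, ξhat ≤ η)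
    (hreg : ∀ η η' : V, treeDepth η = treeDepth η' →
      Nat.card {ζ : V // η ⋖ ζ} = Nat.card {ζ : V // η' ⋖ ζ})
    (U W : ℕ → ℝ) (hU : ∀ j : ℕ, 0 < U j) (hW : ∀ j : ℕ, 0 < W j) :
    sSup {y : ℝ | ∃ f : V → ℝ, (∀ ξ : V, 0 ≤ f ξ) ∧ (∑ ξ : V, f ξ) ≤ 1 ∧
        y = ∑ ξ : V, W (treeDepth ξ) ^ p *
          (∑ ξ' ∈ Finset.univ.filter (fun ξ' : V => ξhat ≤ ξ' ∧ ξ' ≤ ξ),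
            U (treeDepth ξ') * f ξ' ^ (1 / p)) ^ p}
    = sSup {y : ℝ | ∃ f : V → ℝ, (∀ ξ : V, 0 ≤ f ξ) ∧ (∑ ξ : V, f ξ) ≤ 1 ∧
        (∀ ξ ξ' : V, treeDepth ξ = treeDepth ξ' → f ξ = f ξ') ∧
        y = ∑ ξ : V, W (treeDepth ξ) ^ p *
          (∑ ξ' ∈ Finset.univ.filter (fun ξ' : V => ξhat ≤ ξ' ∧ ξ' ≤ ξ),
            U (treeDepth ξ') * f ξ' ^ (1 / p)) ^ p} := by
  have hfactors : (fun η : V => Nat.card {ζ : V // η ⋖ ζ}).FactorsThrough treeDepth :=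
    fun η η' h => hreg η η' h
  obtain ⟨c, hc⟩ : ∃ c : ℕ → ℕ, ∀ η : V, Nat.card {ζ : V // η ⋖ ζ} = c (treeDepth η) :=
    ⟨_, fun η => (hfactors.extend_apply 0 η).symm⟩
  apply csSup_eq_csSup_of_forall_exists_le
  · rintro _ ⟨f, hf, hf1, rfl⟩
    refine ⟨_, ⟨levelMean f ∘ treeDepth, fun ξ => levelMean_nonneg hf _,
      (sum_levelMean_treeDepth f).trans_le hf1, fun ξ ξ' h => congrArg (levelMean f) h,
      rfl⟩, ?_⟩
    exact treeFunctional_le_treeFunctional_levelMean htree.2 c hc hp.le hroot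
      (fun i => (hU i).le) (fun i => (hW i).le) hf
  · rintro _ ⟨f, hf, hf1, -, rfl⟩
    exact ⟨_, ⟨f, hf, hf1, rfl⟩, le_rfl⟩
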